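/- Let r > 0 and let u, v : ℝ → ℝ be twice differentiable with (u̇, v̇) ≠ (0,0) for all t. For γ(t) = ψ(u(t), v(t)), let n(t) = (1/‖γ̇‖)·(−v̇ cosh(u/r)·ψ_u + (u̇/cosh(u/r))·ψ_v) be the unit normal, where ψ_u = (sinh(u/r)cosh(v/r), sinh(u/r)sinh(v/r), cosh(u/r)) and ψ_v = (cosh(u/r)sinh(v/r), cosh(u/r)cosh(v/r), 0). Then γ is an extrinsic catenary of hyperbolic type (satisfies the Euler–Lagrange equations with f(u,v) = cosh(u/r)cosh(v/r)) if and only if its geodesic curvature κ in H²(r) satisfies κ(t) = −⟨n(t), (−1,0,0)⟩₁ / (r cosh(u(t)/r)cosh(v(t)/r)) for all t; here (−1,0,0) is the Killing vector field associated to the Riemannian plane spanned by e_y and e_z, and r cosh(u/r)cosh(v/r) is the distance from γ(t) to that plane. -/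

import Mathlib

/-!
Both Euler–Lagrange expressions of `∫ f ‖γ̇‖ dt` turn out to be multiples of one and the same
quantity `κ f + ∂ₙ f`, with factors `-cosh (u / r) v̇` and `cosh (u / r) u̇`: the tangential part
of the equations holds identically, because the functional does not depend on the parametrization.
As `(u̇, v̇) ≠ 0`, the equations therefore reduce to `κ f = -∂ₙ f`. For
`f = cosh (u / r) cosh (v / r)`, which is `x / r` on `H²(r)`, the normal derivative `∂ₙ f` is the
first coordinate of `n` divided by `r`, i.e. `⟨n, (-1, 0, 0)⟩₁ / r`.
-/

noncomputable section
open Real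

/-- Minkowski inner product of `E₁³`. -/
def mink3 (X Y : ℝ × ℝ × ℝ) : ℝ := -(X.1 * Y.1) + X.2.1 * Y.2.1 + X.2.2 * Y.2.2

/-- Speed `‖γ̇‖ = √(−ẋ² + ẏ² + ż²)` of a curve `(x,y,z)` in `E₁³`. -/
def speed3 (x y z : ℝ → ℝ) (t : ℝ) : ℝ :=
  Real.sqrt (-(deriv x t) ^ 2 + (deriv y t) ^ 2 + (deriv z t) ^ 2)

/-- Geodesic curvature of the curve `(x,y,z)` in `H²(r)`. -/
def kappaH2 (r : ℝ) (x y z : ℝ → ℝ) (t : ℝ) : ℝ :=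
  -(x t * (deriv (deriv y) t * deriv z t - deriv y t * deriv (deriv z) t)
      - y t * (deriv (deriv x) t * deriv z t - deriv x t * deriv (deriv z) t)
      + z t * (deriv (deriv x) t * deriv y t - deriv x t * deriv (deriv y) t))
    / (r * (speed3 x y z t) ^ 3)

/-- First component of `γ(t) = ψ(u(t), v(t))` (semi-geodesic parametrization). -/
def gX (r : ℝ) (u v : ℝ → ℝ) (t : ℝ) : ℝ :=
  r * Real.cosh (u t / r) * Real.cosh (v t / r)

/-- Second component of `γ(t) = ψ(u(t), v(t))`. -/
def gY (r : ℝ) (u v : ℝ → ℝ) (t : ℝ) : ℝ :=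
  r * Real.cosh (u t / r) * Real.sinh (v t / r)

/-- Third component of `γ(t) = ψ(u(t), v(t))`. -/
def gZ (r : ℝ) (u v : ℝ → ℝ) (t : ℝ) : ℝ :=
  r * Real.sinh (u t / r)

/-- `‖γ̇‖` in semi-geodesic coordinates: `√(u̇² + cosh²(u/r) v̇²)`. -/
def speedSG (r : ℝ) (u v : ℝ → ℝ) (t : ℝ) : ℝ :=
  Real.sqrt ((deriv u t) ^ 2 + (Real.cosh (u t / r)) ^ 2 * (deriv v t) ^ 2)

/-- Geodesic curvature of `γ(t) = ψ(u(t), v(t))` in `H²(r)`. -/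
def kappaSG (r : ℝ) (u v : ℝ → ℝ) (t : ℝ) : ℝ :=
  kappaH2 r (gX r u v) (gY r u v) (gZ r u v) t

/-- The Euler–Lagrange equations of the functional `∫ f(u,v) ‖γ̇‖ dt` in
semi-geodesic coordinates. -/
def EulerLagrange (r : ℝ) (f : ℝ → ℝ → ℝ) (u v : ℝ → ℝ) : Prop :=
  ∀ t : ℝ,
    deriv (fun a => f a (v t)) (u t) * speedSG r u v t
        + f (u t) (v t) * Real.sinh (u t / r) * Real.cosh (u t / r) * (deriv v t) ^ 2
          / (r * speedSG r u v t)
      = deriv (fun s => f (u s) (v s) * deriv u s / speedSG r u v s) t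
    ∧ deriv (fun b => f (u t) b) (v t) * speedSG r u v t
      = deriv (fun s =>
          f (u s) (v s) * deriv v s * (Real.cosh (u s / r)) ^ 2 / speedSG r u v s) t

/-- `ψ_u(u,v)`. -/
def psiU (r a b : ℝ) : ℝ × ℝ × ℝ :=
  (Real.sinh (a / r) * Real.cosh (b / r), Real.sinh (a / r) * Real.sinh (b / r),
    Real.cosh (a / r))

/-- `ψ_v(u,v)`. -/
def psiV (r a b : ℝ) : ℝ × ℝ × ℝ :=
  (Real.cosh (a / r) * Real.sinh (b / r), Real.cosh (a / r) * Real.cosh (b / r), 0)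

/-- Unit normal of `γ(t) = ψ(u(t), v(t))` in `H²(r)`:
`n = (1/‖γ̇‖)(−v̇ cosh(u/r) ψ_u + (u̇ / cosh(u/r)) ψ_v)`. -/
def unitNormal (r : ℝ) (u v : ℝ → ℝ) (t : ℝ) : ℝ × ℝ × ℝ :=
  (speedSG r u v t)⁻¹ •
    ((-(deriv v t * Real.cosh (u t / r))) • psiU r (u t) (v t)
      + (deriv u t / Real.cosh (u t / r)) • psiV r (u t) (v t))

section SemiGeodesic

variable {r : ℝ} {u v : ℝ → ℝ} {t : ℝ}

lemma hasDerivAt_cosh_comp_div (hu : DifferentiableAt ℝ u t) :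
    HasDerivAt (fun s => cosh (u s / r)) (sinh (u t / r) * (deriv u t / r)) t :=
  (hu.hasDerivAt.div_const r).cosh

lemma hasDerivAt_sinh_comp_div (hu : DifferentiableAt ℝ u t) :
    HasDerivAt (fun s => sinh (u s / r)) (cosh (u t / r) * (deriv u t / r)) t :=
  (hu.hasDerivAt.div_const r).sinh

lemma deriv_gX (hr : r ≠ 0) (hu : Differentiable ℝ u) (hv : Differentiable ℝ v) :
    deriv (gX r u v) = fun t =>
      deriv u t * sinh (u t / r) * cosh (v t / r)
        + deriv v t * cosh (u t / r) * sinh (v t / r) := by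
  funext t
  refine ((((hasDerivAt_cosh_comp_div (hu t)).const_mul r).mul
    (hasDerivAt_cosh_comp_div (hv t))).congr_deriv ?_).deriv
  field_simp

lemma deriv_gY (hr : r ≠ 0) (hu : Differentiable ℝ u) (hv : Differentiable ℝ v) :
    deriv (gY r u v) = fun t =>
      deriv u t * sinh (u t / r) * sinh (v t / r)
        + deriv v t * cosh (u t / r) * cosh (v t / r) := by
  funext t
  refine ((((hasDerivAt_cosh_comp_div (hu t)).const_mul r).mul
    (hasDerivAt_sinh_comp_div (hv t))).congr_deriv ?_).deriv
  field_simp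

lemma deriv_gZ (hr : r ≠ 0) (hu : Differentiable ℝ u) :
    deriv (gZ r u v) = fun t => deriv u t * cosh (u t / r) := by
  funext t
  refine (((hasDerivAt_sinh_comp_div (hu t)).const_mul r).congr_deriv ?_).deriv
  field_simp

variable (hr : r ≠ 0) (hu : Differentiable ℝ u) (hu2 : Differentiable ℝ (deriv u))
  (hv : Differentiable ℝ v) (hv2 : Differentiable ℝ (deriv v))
include hr hu hu2 hv hv2

lemma deriv_deriv_gX (t : ℝ) : deriv (deriv (gX r u v)) t =
    deriv (deriv u) t * sinh (u t / r) * cosh (v t / r)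
      + deriv (deriv v) t * cosh (u t / r) * sinh (v t / r)
      + (deriv u t ^ 2 + deriv v t ^ 2) * cosh (u t / r) * cosh (v t / r) / r
      + 2 * deriv u t * deriv v t * sinh (u t / r) * sinh (v t / r) / r := by
  rw [deriv_gX hr hu hv]
  refine ((((hu2 t).hasDerivAt.mul (hasDerivAt_sinh_comp_div (hu t))).mul
    (hasDerivAt_cosh_comp_div (hv t))).add (((hv2 t).hasDerivAt.mul
    (hasDerivAt_cosh_comp_div (hu t))).mul (hasDerivAt_sinh_comp_div (hv t))))
    |>.congr_deriv ?_ |>.deriv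
  simp only [Pi.mul_apply]
  ring

lemma deriv_deriv_gY (t : ℝ) : deriv (deriv (gY r u v)) t =
    deriv (deriv u) t * sinh (u t / r) * sinh (v t / r)
      + deriv (deriv v) t * cosh (u t / r) * cosh (v t / r)
      + (deriv u t ^ 2 + deriv v t ^ 2) * cosh (u t / r) * sinh (v t / r) / r
      + 2 * deriv u t * deriv v t * sinh (u t / r) * cosh (v t / r) / r := by
  rw [deriv_gY hr hu hv]
  refine ((((hu2 t).hasDerivAt.mul (hasDerivAt_sinh_comp_div (hu t))).mul
    (hasDerivAt_sinh_comp_div (hv t))).add (((hv2 t).hasDerivAt.mul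
    (hasDerivAt_cosh_comp_div (hu t))).mul (hasDerivAt_cosh_comp_div (hv t))))
    |>.congr_deriv ?_ |>.deriv
  simp only [Pi.mul_apply]
  ring

omit hv hv2 in
lemma deriv_deriv_gZ (t : ℝ) : deriv (deriv (gZ r u v)) t =
    deriv (deriv u) t * cosh (u t / r) + deriv u t ^ 2 * sinh (u t / r) / r := by
  rw [deriv_gZ hr hu]
  refine ((hu2 t).hasDerivAt.mul (hasDerivAt_cosh_comp_div (hu t))).congr_deriv ?_ |>.deriv
  ring

omit hu2 hv2 in
lemma speed3_eq_speedSG (t : ℝ) :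
    speed3 (gX r u v) (gY r u v) (gZ r u v) t = speedSG r u v t := by
  rw [speed3, speedSG, deriv_gX hr hu hv, deriv_gY hr hu hv, deriv_gZ hr hu]
  have hcu := cosh_sq_sub_sinh_sq (u t / r)
  have hcv := cosh_sq_sub_sinh_sq (v t / r)
  congr 1
  grind

/-- The right-hand side is the intrinsic geodesic curvature of `(u, v)` for the metric
`du² + cosh² (u / r) dv²`. -/
lemma kappaSG_eq (t : ℝ) : kappaSG r u v t =
    (cosh (u t / r) * (deriv v t * deriv (deriv u) t - deriv u t * deriv (deriv v) t)
      - sinh (u t / r) * deriv v t * (2 * deriv u t ^ 2 + cosh (u t / r) ^ 2 * deriv v t ^ 2) / r)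
      / speedSG r u v t ^ 3 := by
  rw [kappaSG, kappaH2, speed3_eq_speedSG hr hu hv, deriv_deriv_gX hr hu hu2 hv hv2,
    deriv_deriv_gY hr hu hu2 hv hv2, deriv_deriv_gZ hr hu hu2, deriv_gX hr hu hv, deriv_gY hr hu hv,
    deriv_gZ hr hu, gX, gY, gZ]
  have hcu := cosh_sq_sub_sinh_sq (u t / r)
  have hcv := cosh_sq_sub_sinh_sq (v t / r)
  field_simp
  grind

end SemiGeodesic

section Speed

variable {r : ℝ} {u v : ℝ → ℝ} {t : ℝ}

lemma speedSG_sq : speedSG r u v t ^ 2 = deriv u t ^ 2 + cosh (u t / r) ^ 2 * deriv v t ^ 2 :=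
  sq_sqrt (by positivity)

lemma speedSG_pos (hreg : (deriv u t, deriv v t) ≠ (0, 0)) : 0 < speedSG r u v t := by
  refine sqrt_pos.2 ?_
  rcases ne_or_eq (deriv u t) 0 with hU | hU
  · positivity
  · have hV : deriv v t ≠ 0 := fun hV => hreg (by rw [hU, hV])
    positivity

lemma hasDerivAt_speedSG (hu : DifferentiableAt ℝ u t) (hu2 : DifferentiableAt ℝ (deriv u) t)
    (hv2 : DifferentiableAt ℝ (deriv v) t) (hreg : (deriv u t, deriv v t) ≠ (0, 0)) :
    HasDerivAt (speedSG r u v)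
      ((deriv u t * deriv (deriv u) t
        + cosh (u t / r) * sinh (u t / r) * deriv u t * deriv v t ^ 2 / r
        + cosh (u t / r) ^ 2 * deriv v t * deriv (deriv v) t) / speedSG r u v t) t := by
  have hw := speedSG_pos (r := r) hreg
  refine (((hu2.hasDerivAt.pow 2).add (((hasDerivAt_cosh_comp_div hu).pow 2).mul
    (hv2.hasDerivAt.pow 2))).sqrt ?_).congr_deriv ?_
  · exact (sqrt_pos.1 hw).ne'
  · change _ / (2 * speedSG r u v t) = _
    simp only [Pi.pow_apply]
    field_simp
    ring

end Speed

lemma hasDerivAt_comp_curve {f : ℝ → ℝ → ℝ} {u v : ℝ → ℝ} {t : ℝ}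
    (hf : DifferentiableAt ℝ (Function.uncurry f) (u t, v t))
    (hu : DifferentiableAt ℝ u t) (hv : DifferentiableAt ℝ v t) :
    HasDerivAt (fun s => f (u s) (v s))
      (deriv (fun a => f a (v t)) (u t) * deriv u t
        + deriv (fun b => f (u t) b) (v t) * deriv v t) t := by
  have hL := hf.hasFDerivAt
  have hpu : deriv (fun a => f a (v t)) (u t) = fderiv ℝ (Function.uncurry f) (u t, v t) (1, 0) :=
    (hL.comp_hasDerivAt (f := fun a => (a, v t)) (u t)
      ((hasDerivAt_id' (u t)).prodMk (hasDerivAt_const (u t) (v t)))).deriv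
  have hpv : deriv (fun b => f (u t) b) (v t) = fderiv ℝ (Function.uncurry f) (u t, v t) (0, 1) :=
    (hL.comp_hasDerivAt (f := fun b => (u t, b)) (v t)
      ((hasDerivAt_const (v t) (u t)).prodMk (hasDerivAt_id' (v t)))).deriv
  refine (hL.comp_hasDerivAt t (hu.hasDerivAt.prodMk hv.hasDerivAt)).congr_deriv ?_
  rw [hpu, hpv, mul_comm _ (deriv u t), mul_comm _ (deriv v t), ← smul_eq_mul, ← smul_eq_mul,
    ← map_smul, ← map_smul, ← map_add]
  simp

/-- The derivative of `f` along the unit normal `unitNormal r u v t`, written in the coordinate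
frame `(ψ_u, ψ_v)`. -/
def normalDeriv (r : ℝ) (f : ℝ → ℝ → ℝ) (u v : ℝ → ℝ) (t : ℝ) : ℝ :=
  (deriv (fun b => f (u t) b) (v t) * deriv u t / cosh (u t / r)
    - deriv (fun a => f a (v t)) (u t) * deriv v t * cosh (u t / r)) / speedSG r u v t

section Residuals

variable {r : ℝ} {f : ℝ → ℝ → ℝ} {u v : ℝ → ℝ}
  (hr : r ≠ 0) (hu : Differentiable ℝ u) (hu2 : Differentiable ℝ (deriv u))
  (hv : Differentiable ℝ v) (hv2 : Differentiable ℝ (deriv v)) {t : ℝ}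
  (hreg : (deriv u t, deriv v t) ≠ (0, 0))
  (hf : DifferentiableAt ℝ (Function.uncurry f) (u t, v t))
include hr hu hu2 hv hv2 hreg hf

lemma eulerLagrange_fst_residual :
    deriv (fun a => f a (v t)) (u t) * speedSG r u v t
        + f (u t) (v t) * sinh (u t / r) * cosh (u t / r) * deriv v t ^ 2 / (r * speedSG r u v t)
        - deriv (fun s => f (u s) (v s) * deriv u s / speedSG r u v s) t
      = -(cosh (u t / r) * deriv v t)
          * (kappaSG r u v t * f (u t) (v t) + normalDeriv r f u v t) := by
  have hw := speedSG_pos (r := r) hreg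
  have hsq := speedSG_sq (r := r) (u := u) (v := v) (t := t)
  have hc := cosh_pos (u t / r)
  have hD : HasDerivAt (fun s => f (u s) (v s) * deriv u s / speedSG r u v s) _ t :=
    ((hasDerivAt_comp_curve hf (hu t) (hv t)).mul (hu2 t).hasDerivAt).div
      (hasDerivAt_speedSG (hu t) (hu2 t) (hv2 t) hreg) hw.ne'
  rw [hD.deriv, kappaSG_eq hr hu hu2 hv hv2, normalDeriv]
  simp only [Pi.mul_apply]
  linear_combination (norm := (field_simp; ring))
    (deriv (fun a => f a (v t)) (u t) * speedSG r u v t ^ 2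
      + f (u t) (v t) * sinh (u t / r) * cosh (u t / r) * deriv v t ^ 2 / r
      - f (u t) (v t) * deriv (deriv u) t) / speedSG r u v t ^ 3 * hsq

lemma eulerLagrange_snd_residual :
    deriv (fun b => f (u t) b) (v t) * speedSG r u v t
        - deriv (fun s => f (u s) (v s) * deriv v s * cosh (u s / r) ^ 2 / speedSG r u v s) t
      = cosh (u t / r) * deriv u t
          * (kappaSG r u v t * f (u t) (v t) + normalDeriv r f u v t) := by
  have hw := speedSG_pos (r := r) hreg
  have hsq := speedSG_sq (r := r) (u := u) (v := v) (t := t)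
  have hc := cosh_pos (u t / r)
  have hD : HasDerivAt
      (fun s => f (u s) (v s) * deriv v s * cosh (u s / r) ^ 2 / speedSG r u v s) _ t :=
    (((hasDerivAt_comp_curve hf (hu t) (hv t)).mul (hv2 t).hasDerivAt).mul
      ((hasDerivAt_cosh_comp_div (hu t)).pow 2)).div
      (hasDerivAt_speedSG (hu t) (hu2 t) (hv2 t) hreg) hw.ne'
  rw [hD.deriv, kappaSG_eq hr hu hu2 hv hv2, normalDeriv]
  simp only [Pi.mul_apply, Pi.pow_apply]
  linear_combination (norm := (field_simp; ring))
    (deriv (fun b => f (u t) b) (v t) * speedSG r u v t ^ 2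
      - f (u t) (v t) * cosh (u t / r) ^ 2 * deriv (deriv v) t
      - 2 * f (u t) (v t) * cosh (u t / r) * sinh (u t / r) * deriv u t * deriv v t / r)
      / speedSG r u v t ^ 3 * hsq

end Residuals

theorem eulerLagrange_iff_kappaSG_mul_eq_neg_normalDeriv {r : ℝ} {f : ℝ → ℝ → ℝ} {u v : ℝ → ℝ}
    (hr : r ≠ 0) (hu : Differentiable ℝ u) (hu2 : Differentiable ℝ (deriv u))
    (hv : Differentiable ℝ v) (hv2 : Differentiable ℝ (deriv v))
    (hreg : ∀ t, (deriv u t, deriv v t) ≠ (0, 0)) (hf : Differentiable ℝ (Function.uncurry f)) :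
    EulerLagrange r f u v ↔ ∀ t, kappaSG r u v t * f (u t) (v t) = -normalDeriv r f u v t := by
  refine forall_congr' fun t => ?_
  rw [← sub_eq_zero, eulerLagrange_fst_residual hr hu hu2 hv hv2 (hreg t) (hf _),
    ← sub_eq_zero (a := deriv (fun b => f (u t) b) (v t) * speedSG r u v t),
    eulerLagrange_snd_residual hr hu hu2 hv hv2 (hreg t) (hf _), eq_neg_iff_add_eq_zero]
  have hc := (cosh_pos (u t / r)).ne'
  constructor
  · rintro ⟨h1, h2⟩
    by_contra hN
    have hV : deriv v t = 0 := by simpa [hc, hN] using h1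
    have hU : deriv u t = 0 := by simpa [hc, hN] using h2
    exact hreg t (by rw [hU, hV])
  · intro hN
    simp [hN]

lemma normalDeriv_cosh_mul_cosh {r : ℝ} {u v : ℝ → ℝ} {t : ℝ} (hr : r ≠ 0) :
    normalDeriv r (fun a b => cosh (a / r) * cosh (b / r)) u v t
      = mink3 (unitNormal r u v t) (-1, 0, 0) / r := by
  have hpu : deriv (fun a => cosh (a / r) * cosh (v t / r)) (u t)
      = sinh (u t / r) / r * cosh (v t / r) :=
    ((((hasDerivAt_id' (u t)).div_const r).cosh.mul_const _).congr_deriv (by ring)).deriv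
  have hpv : deriv (fun b => cosh (u t / r) * cosh (b / r)) (v t)
      = cosh (u t / r) * (sinh (v t / r) / r) :=
    ((((hasDerivAt_id' (v t)).div_const r).cosh.const_mul _).congr_deriv (by ring)).deriv
  have hc := (cosh_pos (u t / r)).ne'
  simp only [normalDeriv, hpu, hpv, mink3, unitNormal, psiU, psiV, Prod.smul_mk, Prod.mk_add_mk,
    smul_eq_mul]
  field_simp
  ring

/-- Killing field characterization of extrinsic catenaries of
hyperbolic type: `κ = −⟨n, −e_x⟩₁ / (r cosh(u/r) cosh(v/r))`. -/
theorem extrinsic_catenary_hyperbolic_iff_killing (r : ℝ) (hr : 0 < r) (u v : ℝ → ℝ)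
    (hu : Differentiable ℝ u) (hu2 : Differentiable ℝ (deriv u))
    (hv : Differentiable ℝ v) (hv2 : Differentiable ℝ (deriv v))
    (hreg : ∀ t : ℝ, (deriv u t, deriv v t) ≠ (0, 0)) :
    EulerLagrange r (fun a b => Real.cosh (a / r) * Real.cosh (b / r)) u v ↔
      ∀ t : ℝ,
        kappaSG r u v t
          = -(mink3 (unitNormal r u v t) ((-1, 0, 0) : ℝ × ℝ × ℝ))
            / (r * Real.cosh (u t / r) * Real.cosh (v t / r)) := by
  have hf : Differentiable ℝ (Function.uncurry fun a b => cosh (a / r) * cosh (b / r)) := by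
    unfold Function.uncurry
    fun_prop
  rw [eulerLagrange_iff_kappaSG_mul_eq_neg_normalDeriv hr.ne' hu hu2 hv hv2 hreg hf]
  refine forall_congr' fun t => ?_
  rw [normalDeriv_cosh_mul_cosh hr.ne', ← neg_div, eq_div_iff hr.ne', eq_div_iff (by positivity)]
  ring_nf
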